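/- If J and J* are positive reals with sinh(2J)·sinh(2J*) = 1, then tanh(J*) = exp(-2J). -/
import Mathlib

/-- Kramers-Wannier duality: if J, J* > 0 and sinh(2J)·sinh(2J*) = 1,
then tanh(J*) = exp(-2J). -/
theorem kramers_wannier_duality (J Jstar : ℝ) (hJ : 0 < J) (hJstar : 0 < Jstar)
    (h : Real.sinh (2 * J) * Real.sinh (2 * Jstar) = 1) :
    Real.tanh Jstar = Real.exp (-2 * J) := by
  have hs : 0 < Real.sinh Jstar := Real.sinh_pos_iff.2 hJstar
  have hc : 0 < Real.cosh Jstar := Real.cosh_pos Jstar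
  set s := Real.sinh Jstar with hs'
  set c := Real.cosh Jstar with hc'
  have hpyth : c ^ 2 - s ^ 2 = 1 := by
    have := Real.cosh_sq_sub_sinh_sq Jstar
    nlinarith [this]
  have hdouble : Real.sinh (2 * Jstar) = 2 * s * c := by
    rw [two_mul, Real.sinh_add]; ring
  have h1 : Real.sinh (2 * J) = 1 / (2 * s * c) := by
    rw [hdouble] at h
    field_simp
    linarith [h]
  have hcs : 0 < c / s := div_pos hc hs
  have h2 : Real.sinh (Real.log (c / s)) = 1 / (2 * s * c) := by
    rw [Real.sinh_eq, Real.exp_neg, Real.exp_log hcs]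
    have h3 : c * c - s * s = 1 := by nlinarith [hpyth]
    field_simp
    nlinarith [h3, mul_pos hs hc]
  have h2J : 2 * J = Real.log (c / s) := Real.sinh_injective (h1.trans h2.symm)
  have : Real.exp (-2 * J) = s / c := by
    rw [show (-2 : ℝ) * J = -(2 * J) by ring, h2J, Real.exp_neg, Real.exp_log hcs]
    field_simp
  rw [this, Real.tanh_eq_sinh_div_cosh]
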